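/- Countable intersections of winning sets: Let n ∈ ℕ, let A be a diagonal (n×n)-matrix with diagonal entries β₁₁,…,β_nn ∈ (0,1), let ρ₁ ≥ ρ₂ > 0 and c ∈ (0,1). Let {S_j}_{j∈J} be an at most countable collection of subsets of ℝ^n such that, for each j ∈ J, the set S_j is (α_j,A,c,ρ₂,ρ₁)-winning for some α_j > 0. If α = (Σ_{j∈J} α_j^c)^{1/c} is finite, then S = ∩_{j∈J} S_j is (α,A,c,ρ₂,ρ₁)-winning. -/
import Mathlib


open scoped ENNReal

/-- The axis-parallel closed box `A^t(B[0,r]) + y`, where `A` is the diagonal matrix with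
diagonal entries `β j`: the set of `x` with `|x j - y j| ≤ (β j)^t * r` for every `j`. -/
def gameBox {n : ℕ} (β : Fin n → ℝ) (t r : ℝ) (y : Fin n → ℝ) : Set (Fin n → ℝ) :=
  {x | ∀ j, |x j - y j| ≤ β j ^ t * r}

/-- A legal move of Player II on turn `m + 1` (turns are indexed from `1` in the paper) of the
`(α, A, c, ρ₂, ρ₁)`-potential game: an at most countable collection of pairs `(q, y)` with
`q ≥ 1`, satisfying, when `c > 0`,
`Σ (∏_j β_j^q)^c ≤ (α ∏_j β_j^(m+1))^c`, and, when `c = 0`, consisting of at most one pair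
`(q, y)`, which must satisfy `∏_j β_j^q ≤ α ∏_j β_j^(m+1)`. The empty collection (a skip) is
always legal. -/
def LegalMove {n : ℕ} (β : Fin n → ℝ) (α c : ℝ) (m : ℕ)
    (M : Set (ℝ × (Fin n → ℝ))) : Prop :=
  M.Countable ∧ (∀ p ∈ M, 1 ≤ p.1) ∧
    (if 0 < c then
      ∑' p : M, ENNReal.ofReal ((∏ j, β j ^ p.1.1) ^ c)
        ≤ ENNReal.ofReal ((α * ∏ j, β j ^ (m + 1 : ℝ)) ^ c)
    else
      M.Subsingleton ∧ ∀ p ∈ M, (∏ j, β j ^ p.1) ≤ α * ∏ j, β j ^ (m + 1 : ℝ))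

/-- `S` is a winning set for Player II in the `(α, A, c, ρ₂, ρ₁)`-potential game, where `A` is
the diagonal matrix with diagonal entries `β j`.  Player I's play on turn `m + 1` is
`U_{m+1} = A^{m+1}(B[0,r]) + b m` with `ρ₂ ≤ r ≤ ρ₁` and `U_{m+2} ⊆ U_{m+1}`; a strategy for
Player II assigns to every finite history (the radius `r` together with the centres
`b 0, …, b m` of Player I's plays so far) a collection of pairs `(q, y)`, which must be a legal
move whenever the history is legal.  The strategy is winning for `S` if for every legal infinite
play in which Player II follows it, every point `x` of `⋂ U_m` which avoids the deleted region
`⋃_m ⋃_{(q,y)} (A^q(B[0,r]) + y)` lies in `S`. -/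
def IsWinning {n : ℕ} (β : Fin n → ℝ) (α c ρ₂ ρ₁ : ℝ) (S : Set (Fin n → ℝ)) : Prop :=
  ∃ σ : ℝ → (m : ℕ) → (Fin (m + 1) → (Fin n → ℝ)) → Set (ℝ × (Fin n → ℝ)),
    (∀ (r : ℝ) (m : ℕ) (b : Fin (m + 1) → (Fin n → ℝ)),
      ρ₂ ≤ r → r ≤ ρ₁ →
      (∀ i : Fin m,
        gameBox β ((i : ℕ) + 2 : ℝ) r (b i.succ) ⊆ gameBox β ((i : ℕ) + 1 : ℝ) r (b i.castSucc)) →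
      LegalMove β α c m (σ r m b)) ∧
    (∀ (r : ℝ) (b : ℕ → (Fin n → ℝ)),
      ρ₂ ≤ r → r ≤ ρ₁ →
      (∀ m : ℕ, gameBox β ((m : ℕ) + 2 : ℝ) r (b (m + 1)) ⊆ gameBox β ((m : ℕ) + 1 : ℝ) r (b m)) →
      ∀ x : Fin n → ℝ, (∀ m : ℕ, x ∈ gameBox β ((m : ℕ) + 1 : ℝ) r (b m)) →
        x ∉ ⋃ (m : ℕ), ⋃ p ∈ σ r m (fun i : Fin (m + 1) => b (i : ℕ)), gameBox β p.1 r p.2 →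
        x ∈ S)

/-- The family `𝒮(α, A, c, ρ₂)` of sets that are `(α, A, c, ρ₂, ρ₁)`-winning for some
`ρ₁ ≥ ρ₂`. -/
def winFamily {n : ℕ} (β : Fin n → ℝ) (α c ρ₂ : ℝ) : Set (Set (Fin n → ℝ)) :=
  {S | ∃ ρ₁ : ℝ, ρ₂ ≤ ρ₁ ∧ IsWinning β α c ρ₂ ρ₁ S}

set_option maxHeartbeats 1000000 in
/-- **Countable intersections of winning sets.**  Let `A` be the diagonal `(n × n)`-matrix with
diagonal entries `β j ∈ (0,1)`, let `ρ₁ ≥ ρ₂ > 0` and `c ∈ (0,1)`.  Let `(S j)_{j ∈ J}` be an at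
most countable collection of subsets of `ℝⁿ` such that each `S j` is `(αf j, A, c, ρ₂, ρ₁)`-winning
with `αf j > 0`.  If `α = (Σ_j (αf j)^c)^(1/c)` is finite (i.e. the sum converges), then
`⋂ j, S j` is `(α, A, c, ρ₂, ρ₁)`-winning. -/
theorem winning_countable_inter {n : ℕ} (β : Fin n → ℝ) (hβ : ∀ j, β j ∈ Set.Ioo (0 : ℝ) 1)
    (ρ₁ ρ₂ : ℝ) (hρ₂ : 0 < ρ₂) (hρ : ρ₂ ≤ ρ₁) (c : ℝ) (hc : c ∈ Set.Ioo (0 : ℝ) 1)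
    (J : Type) [Countable J] (S : J → Set (Fin n → ℝ)) (αf : J → ℝ)
    (hαf : ∀ j, 0 < αf j) (hwin : ∀ j, IsWinning β (αf j) c ρ₂ ρ₁ (S j))
    (hsum : Summable fun j => αf j ^ c)
    (α : ℝ) (hα : α = (∑' j, αf j ^ c) ^ (1 / c)) :
    IsWinning β α c ρ₂ ρ₁ (⋂ j, S j) := by
  choose σ hleg hwin' using hwin
  refine ⟨fun r m b => ⋃ j, σ j r m b, ?_, ?_⟩
  · intro r m b hr1 hr2 hnest
    have hlegs := fun j => hleg j r m b hr1 hr2 hnest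
    refine ⟨Set.countable_iUnion fun j => (hlegs j).1, ?_, ?_⟩
    · intro p hp
      obtain ⟨j, hj⟩ := Set.mem_iUnion.1 hp
      exact (hlegs j).2.1 p hj
    rw [if_pos hc.1]
    set P : ℝ := ∏ j, β j ^ (m + 1 : ℝ) with hP
    have hPpos : 0 < P := Finset.prod_pos fun j _ => Real.rpow_pos_of_pos (hβ j).1 _
    have hbound : ∀ j, (∑' p : (σ j r m b), ENNReal.ofReal ((∏ i, β i ^ p.1.1) ^ c))
        ≤ ENNReal.ofReal ((αf j * P) ^ c) := by
      intro j
      have := (hlegs j).2.2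
      rwa [if_pos hc.1] at this
    have hsum' : Summable (fun j => (αf j * P) ^ c) := by
      have : (fun j => (αf j * P) ^ c) = fun j => αf j ^ c * P ^ c := by
        funext j
        exact Real.mul_rpow (hαf j).le hPpos.le
      rw [this]
      exact hsum.mul_right _
    beta_reduce
    have key := @ENNReal.tsum_iUnion_le_tsum (ℝ × (Fin n → ℝ)) J
      (fun p => ENNReal.ofReal ((∏ i, β i ^ p.1) ^ c)) (fun j => σ j r m b)
    refine le_trans key ?_
    calc ∑' j, ∑' p : (σ j r m b), ENNReal.ofReal ((∏ i, β i ^ p.1.1) ^ c)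
        ≤ ∑' j, ENNReal.ofReal ((αf j * P) ^ c) := ENNReal.tsum_le_tsum hbound
      _ = ENNReal.ofReal (∑' j, (αf j * P) ^ c) :=
          (ENNReal.ofReal_tsum_of_nonneg
            (fun j => Real.rpow_nonneg (mul_nonneg (hαf j).le hPpos.le) c) hsum').symm
      _ = ENNReal.ofReal ((α * P) ^ c) := by
          congr 1
          have h1 : ∀ j, (αf j * P) ^ c = αf j ^ c * P ^ c := fun j =>
            Real.mul_rpow (hαf j).le hPpos.le
          have htn : (0 : ℝ) ≤ ∑' j, αf j ^ c :=
            tsum_nonneg fun j => Real.rpow_nonneg (hαf j).le c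
          have hαc : α ^ c = ∑' j, αf j ^ c := by
            rw [hα, ← Real.rpow_mul htn, one_div, inv_mul_cancel₀ (ne_of_gt hc.1),
              Real.rpow_one]
          simp_rw [h1]
          rw [tsum_mul_right, Real.mul_rpow (by rw [hα]; exact Real.rpow_nonneg htn _)
            hPpos.le, hαc]
  · intro r b hr1 hr2 hnest x hx hxdel
    refine Set.mem_iInter.2 fun j => ?_
    refine hwin' j r b hr1 hr2 hnest x hx ?_
    intro hmem
    apply hxdel
    simp only [Set.mem_iUnion] at hmem ⊢
    obtain ⟨m, p, hpmem, hbox⟩ := hmem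
    exact ⟨m, p, ⟨j, hpmem⟩, hbox⟩
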